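/- arXiv:0901.0295 — 2 statements merged into one kernel-verified Lean document; each statement's English description precedes it below -/
import Mathlib

section
/- Let V be a complex vector space, and let 𝓕 be a chain of complex subspaces of V totally ordered by inclusion. Suppose J : V → V is a conjugate-linear map with J² = -id such that J(F) ∈ 𝓕 for every F ∈ 𝓕. Then J(F) = F for every F ∈ 𝓕; in particular each F is a quaternionic subspace (stable under the ℍ-structure given by J). -/
theorem chain_stable_under_quaternionic_structure
    (V : Type*) [AddCommGroup V] [Module ℂ V]
    (𝓕 : Set (Submodule ℂ V)) (hchain : IsChain (· ≤ ·) 𝓕)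
    (J : V →ₗ⋆[ℂ] V) (hJ : ∀ v : V, J (J v) = -v)
    (hmap : ∀ F ∈ 𝓕, ∃ G ∈ 𝓕, J '' (F : Set V) = (G : Set V)) :
    ∀ F ∈ 𝓕, J '' (F : Set V) = (F : Set V) := by
  intro F hF
  obtain ⟨G, hG, hFG⟩ := hmap F hF
  have hinv : J '' (G : Set V) = (F : Set V) := by
    rw [← hFG]
    ext x
    constructor
    · rintro ⟨y, ⟨v, hv, rfl⟩, rfl⟩
      rw [hJ]
      exact F.neg_mem hv
    · intro hx
      exact ⟨J (-x), ⟨-x, F.neg_mem hx, rfl⟩, by rw [hJ, neg_neg]⟩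
  suffices h : F = G by rw [hFG, ← h]
  rcases eq_or_ne F G with h | h
  · exact h
  rcases hchain hF hG h with h' | h'
  · -- F ≤ G, so G = J''F ⊆ J''G = F
    refine le_antisymm h' ?_
    intro x hx
    have hx' : x ∈ ⇑J '' (F : Set V) := by rw [hFG]; exact hx
    have : x ∈ ⇑J '' (G : Set V) := Set.image_mono h' hx'
    rwa [hinv] at this
  · -- G ≤ F, so F = J''G ⊆ J''F = G
    refine le_antisymm ?_ h'
    intro x hx
    have hx' : x ∈ ⇑J '' (G : Set V) := by rw [hinv]; exact hx
    have : x ∈ ⇑J '' (F : Set V) := Set.image_mono h' hx'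
    rwa [hFG] at this
end

section
/- Let V, W be countable-dimensional vector spaces over a field k with a nondegenerate bilinear pairing ⟨·,·⟩ : V × W → k. Then there exist bases (v_n) of V and (w_n) of W that are dual: ⟨v_m, w_n⟩ = δ_{mn}. -/
open Submodule Finset

section MackeyAux

variable {k V W : Type*} [Field k] [AddCommGroup V] [Module k V] [AddCommGroup W] [Module k W]

/-- A finite partial dual family for the pairing `B`. -/
structure MFam (B : V →ₗ[k] W →ₗ[k] k) where
  n : ℕ
  v : ℕ → V
  w : ℕ → W
  dual : ∀ i < n, ∀ j < n, B (v i) (w j) = if i = j then 1 else 0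

variable {B : V →ₗ[k] W →ₗ[k] k}

/-- Swap the two sides of a partial dual family. -/
def MFam.flip (F : MFam B) : MFam B.flip where
  n := F.n
  v := F.w
  w := F.v
  dual := fun i hi j hj => by
    rw [LinearMap.flip_apply, F.dual j hj i hi]
    simp [eq_comm]

/-- Unswap the two sides of a partial dual family. -/
def MFam.unflip (F : MFam B.flip) : MFam B where
  n := F.n
  v := F.w
  w := F.v
  dual := fun i hi j hj => by
    have := F.dual j hj i hi
    rw [LinearMap.flip_apply] at this
    rw [this]
    simp [eq_comm]

/-- The result data of one extension step on the `V` side. -/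
structure MExt (B : V →ₗ[k] W →ₗ[k] k) (F : MFam B) (x : V) where
  F' : MFam B
  nle : F.n ≤ F'.n
  hv : ∀ i < F.n, F'.v i = F.v i
  hw : ∀ i < F.n, F'.w i = F.w i
  mem : x ∈ span k (F'.v '' Set.Iio F'.n)

/-- One extension step: enlarge a partial dual family so that its `V`-span contains `x`. -/
noncomputable def extendV (hndV : ∀ v : V, (∀ w : W, B v w = 0) → v = 0)
    (F : MFam B) (x : V) : MExt B F x := by
  classical
  set v' : V := x - ∑ i ∈ range F.n, B x (F.w i) • F.v i with hv'def
  have hBv' : ∀ j < F.n, B v' (F.w j) = 0 := by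
    intro j hj
    have : B v' (F.w j)
        = B x (F.w j) - ∑ i ∈ range F.n, B x (F.w i) * B (F.v i) (F.w j) := by
      simp [hv'def, map_sub, map_sum, LinearMap.map_smul₂, smul_eq_mul]
    rw [this, Finset.sum_eq_single j]
    · rw [F.dual j hj j hj]; simp
    · intro i hi hij
      rw [F.dual i (mem_range.mp hi) j hj, if_neg hij, mul_zero]
    · intro h; exact absurd (mem_range.mpr hj) h
  by_cases hz : v' = 0
  · refine ⟨F, le_rfl, fun _ _ => rfl, fun _ _ => rfl, ?_⟩
    have hx : x = ∑ i ∈ range F.n, B x (F.w i) • F.v i := by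
      have h0 : x - ∑ i ∈ range F.n, B x (F.w i) • F.v i = 0 := hv'def ▸ hz
      exact sub_eq_zero.mp h0
    rw [hx]
    refine Submodule.sum_mem _ fun i hi => Submodule.smul_mem _ _ (subset_span ?_)
    exact ⟨i, mem_range.mp hi, rfl⟩
  · have hex : ∃ w0 : W, B v' w0 ≠ 0 := by
      by_contra h
      push_neg at h
      exact hz (hndV v' h)
    set w0 : W := Classical.choose hex with hw0def
    have hw0 : B v' w0 ≠ 0 := Classical.choose_spec hex
    set w1 : W := (B v' w0)⁻¹ • w0 with hw1def
    have hBw1 : B v' w1 = 1 := by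
      rw [hw1def, map_smul, smul_eq_mul, inv_mul_cancel₀ hw0]
    set w2 : W := w1 - ∑ i ∈ range F.n, B (F.v i) w1 • F.w i with hw2def
    have hvw2 : ∀ i < F.n, B (F.v i) w2 = 0 := by
      intro i hi
      have : B (F.v i) w2
          = B (F.v i) w1 - ∑ j ∈ range F.n, B (F.v j) w1 * B (F.v i) (F.w j) := by
        simp [hw2def, map_sub, map_sum, map_smul, smul_eq_mul]
      rw [this, Finset.sum_eq_single i]
      · rw [F.dual i hi i hi]; simp
      · intro j hj hji
        rw [F.dual i hi j (mem_range.mp hj), if_neg (Ne.symm hji), mul_zero]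
      · intro h; exact absurd (mem_range.mpr hi) h
    have hv'w2 : B v' w2 = 1 := by
      have : B v' w2 = B v' w1 - ∑ j ∈ range F.n, B (F.v j) w1 * B v' (F.w j) := by
        simp [hw2def, map_sub, map_sum, map_smul, smul_eq_mul]
      rw [this, hBw1, Finset.sum_eq_zero, sub_zero]
      intro j hj
      rw [hBv' j (mem_range.mp hj), mul_zero]
    refine ⟨⟨F.n + 1, Function.update F.v F.n v', Function.update F.w F.n w2, ?_⟩,
      Nat.le_succ _, ?_, ?_, ?_⟩
    · intro i hi j hj
      rcases Nat.lt_succ_iff_lt_or_eq.mp hi with hi' | hi' <;>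
        rcases Nat.lt_succ_iff_lt_or_eq.mp hj with hj' | hj'
      · rw [Function.update_of_ne (Nat.ne_of_lt hi'), Function.update_of_ne (Nat.ne_of_lt hj')]
        rw [F.dual i hi' j hj']
      · subst hj'
        rw [Function.update_of_ne (Nat.ne_of_lt hi'), Function.update_self,
          hvw2 i hi', if_neg (Nat.ne_of_lt hi')]
      · subst hi'
        rw [Function.update_self, Function.update_of_ne (Nat.ne_of_lt hj'),
          hBv' j hj', if_neg (Ne.symm (Nat.ne_of_lt hj'))]
      · subst hi'; subst hj'
        rw [Function.update_self, Function.update_self, hv'w2, if_pos rfl]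
    · intro i hi; exact Function.update_of_ne (Nat.ne_of_lt hi) _ _
    · intro i hi; exact Function.update_of_ne (Nat.ne_of_lt hi) _ _
    · have hx : x = v' + ∑ i ∈ range F.n, B x (F.w i) • F.v i := by
        rw [hv'def]; abel
      rw [hx]
      refine Submodule.add_mem _ (subset_span ⟨F.n, Nat.lt_succ_self _, Function.update_self _ _ _⟩) ?_
      refine Submodule.sum_mem _ fun i hi => Submodule.smul_mem _ _ (subset_span ?_)
      exact ⟨i, Nat.lt_succ_of_lt (mem_range.mp hi),
        Function.update_of_ne (Nat.ne_of_lt (mem_range.mp hi)) _ _⟩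

/-- The result data of one extension step on the `W` side. -/
structure MExtW (B : V →ₗ[k] W →ₗ[k] k) (F : MFam B) (x : W) where
  F' : MFam B
  nle : F.n ≤ F'.n
  hv : ∀ i < F.n, F'.v i = F.v i
  hw : ∀ i < F.n, F'.w i = F.w i
  mem : x ∈ span k (F'.w '' Set.Iio F'.n)

/-- One extension step: enlarge a partial dual family so that its `W`-span contains `x`. -/
noncomputable def extendW (hndW : ∀ w : W, (∀ v : V, B v w = 0) → w = 0)
    (F : MFam B) (x : W) : MExtW B F x := by
  have hndW' : ∀ w : W, (∀ v : V, B.flip w v = 0) → w = 0 := by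
    intro w h; exact hndW w fun v => by simpa using h v
  let E := extendV hndW' F.flip x
  exact ⟨E.F'.unflip, E.nle, E.hw, E.hv, E.mem⟩

variable (B) in
/-- The sequence of partial dual families, alternately absorbing `e m` and `f m`. -/
noncomputable def stages (hndV : ∀ v : V, (∀ w : W, B v w = 0) → v = 0)
    (hndW : ∀ w : W, (∀ v : V, B v w = 0) → w = 0) (e : ℕ → V) (f : ℕ → W) : ℕ → MFam B
  | 0 => ⟨0, fun _ => 0, fun _ => 0, fun i hi => absurd hi (Nat.not_lt_zero i)⟩
  | s + 1 =>
    if s % 2 = 0 then (extendV hndV (stages hndV hndW e f s) (e (s / 2))).F'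
    else (extendW hndW (stages hndV hndW e f s) (f (s / 2))).F'

section Stages

variable (hndV : ∀ v : V, (∀ w : W, B v w = 0) → v = 0)
  (hndW : ∀ w : W, (∀ v : V, B v w = 0) → w = 0) (e : ℕ → V) (f : ℕ → W)

local notation "St" => stages B hndV hndW e f

lemma stages_succ_prop (s : ℕ) :
    (St s).n ≤ (St (s+1)).n ∧ (∀ i < (St s).n, (St (s+1)).v i = (St s).v i) ∧
      (∀ i < (St s).n, (St (s+1)).w i = (St s).w i) := by
  rw [stages]
  by_cases h : s % 2 = 0
  · rw [if_pos h]
    exact ⟨(extendV hndV _ _).nle, (extendV hndV _ _).hv, (extendV hndV _ _).hw⟩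
  · rw [if_neg h]
    exact ⟨(extendW hndW _ _).nle, (extendW hndW _ _).hv, (extendW hndW _ _).hw⟩

lemma stages_n_mono : Monotone fun s => (St s).n :=
  monotone_nat_of_le_succ fun s => (stages_succ_prop hndV hndW e f s).1

lemma stages_stable {s t : ℕ} (hst : s ≤ t) :
    ∀ i < (St s).n, (St t).v i = (St s).v i ∧ (St t).w i = (St s).w i := by
  induction t, hst using Nat.le_induction with
  | base => exact fun i _ => ⟨rfl, rfl⟩
  | succ t hst ih =>
    intro i hi
    have hi' : i < (St t).n := lt_of_lt_of_le hi (stages_n_mono hndV hndW e f hst)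
    obtain ⟨h1, h2⟩ := ih i hi
    exact ⟨((stages_succ_prop hndV hndW e f t).2.1 i hi').trans h1,
      ((stages_succ_prop hndV hndW e f t).2.2 i hi').trans h2⟩

lemma stages_e_mem (m : ℕ) :
    e m ∈ span k ((St (2*m+1)).v '' Set.Iio (St (2*m+1)).n) := by
  have h2 : (2*m) % 2 = 0 := by omega
  have h3 : (2*m) / 2 = m := by omega
  have : St (2*m+1) = (extendV hndV (St (2*m)) (e ((2*m) / 2))).F' := by
    rw [stages, if_pos h2]
  rw [this, h3]
  exact (extendV hndV (St (2*m)) (e m)).mem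

lemma stages_f_mem (m : ℕ) :
    f m ∈ span k ((St (2*m+2)).w '' Set.Iio (St (2*m+2)).n) := by
  have h2 : ¬ ((2*m+1) % 2 = 0) := by omega
  have h3 : (2*m+1) / 2 = m := by omega
  have : St (2*m+2) = (extendW hndW (St (2*m+1)) (f ((2*m+1) / 2))).F' := by
    rw [stages, if_neg h2]
  rw [this, h3]
  exact (extendW hndW (St (2*m+1)) (f m)).mem

lemma stages_v_subset {s t : ℕ} (hst : s ≤ t) :
    (St s).v '' Set.Iio (St s).n ⊆ (St t).v '' Set.Iio (St t).n := by
  rintro y ⟨i, hi, rfl⟩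
  exact ⟨i, lt_of_lt_of_le hi (stages_n_mono hndV hndW e f hst),
    (stages_stable hndV hndW e f hst i hi).1⟩

lemma stages_w_subset {s t : ℕ} (hst : s ≤ t) :
    (St s).w '' Set.Iio (St s).n ⊆ (St t).w '' Set.Iio (St t).n := by
  rintro y ⟨i, hi, rfl⟩
  exact ⟨i, lt_of_lt_of_le hi (stages_n_mono hndV hndW e f hst),
    (stages_stable hndV hndW e f hst i hi).2⟩

/-- The sizes of the partial families are unbounded when `e` is linearly independent. -/
lemma stages_unbounded (he : LinearIndependent k e) (i : ℕ) :
    ∃ s : ℕ, i < (St s).n := by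
  classical
  set S : ℕ := 2 * i + 1 with hS
  refine ⟨S, ?_⟩
  set A : Set V := (St S).v '' Set.Iio (St S).n with hA
  have hmem : ∀ m : ℕ, m ≤ i → e m ∈ span k A := by
    intro m hm
    have h1 := stages_e_mem hndV hndW e f m
    have h2 : (2*m+1 : ℕ) ≤ S := by omega
    exact span_mono (stages_v_subset hndV hndW e f h2) h1
  -- linear independence of `e ∘ Fin.val` on `Fin (i+1)` gives `i + 1 ≤ (St S).n`
  set M := span k A with hM
  have hli : LinearIndependent k (fun j : Fin (i+1) =>
      (⟨e j, hmem j (Nat.lt_succ_iff.mp j.2)⟩ : M)) := by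
    apply LinearIndependent.of_comp M.subtype
    exact he.comp (fun j : Fin (i+1) => (j : ℕ)) Fin.val_injective
  have hAfin : A.Finite := Set.Finite.image _ (Set.finite_Iio _)
  haveI : FiniteDimensional k M := FiniteDimensional.span_of_finite k hAfin
  have h1 : i + 1 ≤ Module.finrank k M := by
    have := hli.fintype_card_le_finrank
    simpa using this
  have h2 : Module.finrank k M ≤ (St S).n := by
    set T : Finset V := (Finset.range (St S).n).image (St S).v with hT
    have hTA : (T : Set V) = A := by
      rw [hT, Finset.coe_image, Finset.coe_range]
    calc Module.finrank k M = (T : Set V).finrank k := by rw [Set.finrank, hM, hTA]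
      _ ≤ T.card := finrank_span_finset_le_card T
      _ ≤ (St S).n := le_trans (Finset.card_image_le) (by simp)
  omega

end Stages

end MackeyAux

/-- Mackey's theorem: countable-dimensional vector spaces with a nondegenerate bilinear
pairing admit dual bases. -/
theorem exists_dual_bases_of_countable_dim
    (k V W : Type*) [Field k] [AddCommGroup V] [Module k V] [AddCommGroup W] [Module k W]
    (hV : Module.rank k V ≤ Cardinal.aleph0) (hW : Module.rank k W ≤ Cardinal.aleph0)
    (B : V →ₗ[k] W →ₗ[k] k)
    (hndV : ∀ v : V, (∀ w : W, B v w = 0) → v = 0)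
    (hndW : ∀ w : W, (∀ v : V, B v w = 0) → w = 0) :
    ∃ (I : Set ℕ) (b : Module.Basis I k V) (c : Module.Basis I k W),
      ∀ i j : I, B (b i) (c j) = if i = j then 1 else 0 := by
  classical
  have hinjV : Function.Injective B := by
    rw [← LinearMap.ker_eq_bot]
    refine LinearMap.ker_eq_bot'.mpr fun v hv => hndV v fun w => ?_
    rw [hv]; rfl
  have hinjW : Function.Injective B.flip := by
    rw [← LinearMap.ker_eq_bot]
    refine LinearMap.ker_eq_bot'.mpr fun w hw => hndW w fun v => ?_
    have := congrFun (congrArg DFunLike.coe hw) v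
    simpa using this
  by_cases hfin : FiniteDimensional k V
  · -- finite-dimensional case
    haveI : FiniteDimensional k W := FiniteDimensional.of_injective B.flip hinjW
    have hle1 : Module.finrank k V ≤ Module.finrank k W := by
      have := LinearMap.finrank_le_finrank_of_injective hinjV
      rwa [Subspace.dual_finrank_eq] at this
    have hle2 : Module.finrank k W ≤ Module.finrank k V := by
      have := LinearMap.finrank_le_finrank_of_injective hinjW
      rwa [Subspace.dual_finrank_eq] at this
    have heq : Module.finrank k V = Module.finrank k (Module.Dual k W) := by
      rw [Subspace.dual_finrank_eq]; omega
    set φ := B.linearEquivOfInjective hinjV heq with hφ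
    have hφB : ∀ x : V, φ x = B x := fun x => B.linearEquivOfInjective_apply hinjV heq x
    set m := Module.finrank k W with hm
    set c : Module.Basis (Fin m) k W := Module.finBasis k W with hc
    set b' : Module.Basis (Fin m) k V := c.dualBasis.map φ.symm with hb'
    have key : ∀ i j : Fin m, B (b' i) (c j) = if i = j then 1 else 0 := by
      intro i j
      have h1 : b' i = φ.symm (c.dualBasis i) := by rw [hb', Module.Basis.map_apply]
      have h2 : B (b' i) (c j) = (c.dualBasis i) (c j) := by
        rw [← hφB, h1, LinearEquiv.apply_symm_apply]
      rw [h2, Module.Basis.dualBasis_apply_self]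
      simp [eq_comm]
    set g : (Set.Iio m : Set ℕ) ≃ Fin m :=
      ⟨fun x => ⟨x.1, x.2⟩, fun i => ⟨i.1, i.2⟩, fun _ => rfl, fun _ => rfl⟩ with hg
    refine ⟨Set.Iio m, b'.reindex g.symm, c.reindex g.symm, fun i j => ?_⟩
    rw [Module.Basis.reindex_apply, Module.Basis.reindex_apply, Equiv.symm_symm, key (g i) (g j)]
    simp only [EmbeddingLike.apply_eq_iff_eq]
  · -- infinite-dimensional case
    have hfinW : ¬ FiniteDimensional k W := fun h =>
      hfin (FiniteDimensional.of_injective B hinjV)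
    -- bases of `V` and `W` indexed by `ℕ`
    have hrV : Module.rank k V = Cardinal.aleph0 := by
      refine le_antisymm hV (not_lt.mp fun h => hfin ?_)
      exact Module.rank_lt_aleph0_iff.mp h
    have hrW : Module.rank k W = Cardinal.aleph0 := by
      refine le_antisymm hW (not_lt.mp fun h => hfinW ?_)
      exact Module.rank_lt_aleph0_iff.mp h
    obtain ⟨e⟩ : Nonempty (Module.Basis ℕ k V) := by
      have b0 := Module.Basis.ofVectorSpace k V
      have : Cardinal.lift.{0} (Cardinal.mk (Module.Basis.ofVectorSpaceIndex k V))
          = Cardinal.lift.{u_2} (Cardinal.mk ℕ) := by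
        rw [b0.mk_eq_rank'', hrV, Cardinal.mk_nat, Cardinal.lift_aleph0, Cardinal.lift_aleph0]
      exact ⟨b0.reindex (Cardinal.lift_mk_eq'.mp this).some⟩
    obtain ⟨f⟩ : Nonempty (Module.Basis ℕ k W) := by
      have b0 := Module.Basis.ofVectorSpace k W
      have : Cardinal.lift.{0} (Cardinal.mk (Module.Basis.ofVectorSpaceIndex k W))
          = Cardinal.lift.{u_3} (Cardinal.mk ℕ) := by
        rw [b0.mk_eq_rank'', hrW, Cardinal.mk_nat, Cardinal.lift_aleph0, Cardinal.lift_aleph0]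
      exact ⟨b0.reindex (Cardinal.lift_mk_eq'.mp this).some⟩
    set St := stages B hndV hndW ⇑e ⇑f with hSt
    have hub : ∀ i : ℕ, ∃ s : ℕ, i < (St s).n :=
      stages_unbounded hndV hndW ⇑e ⇑f e.linearIndependent
    choose st hst using hub
    set vv : ℕ → V := fun i => (St (st i)).v i with hvv
    set ww : ℕ → W := fun i => (St (st i)).w i with hww
    have hstab : ∀ t : ℕ, ∀ i < (St t).n, (St t).v i = vv i ∧ (St t).w i = ww i := by
      intro t i hi
      have h1 := stages_stable hndV hndW ⇑e ⇑f (le_max_left t (st i)) i hi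
      have h2 := stages_stable hndV hndW ⇑e ⇑f (le_max_right t (st i)) i (hst i)
      exact ⟨h1.1.symm.trans h2.1, h1.2.symm.trans h2.2⟩
    have hdual : ∀ i j : ℕ, B (vv i) (ww j) = if i = j then 1 else 0 := by
      intro i j
      set u := max (st i) (st j) with hu
      have hi : i < (St u).n :=
        lt_of_lt_of_le (hst i) (stages_n_mono hndV hndW ⇑e ⇑f (le_max_left _ _))
      have hj : j < (St u).n :=
        lt_of_lt_of_le (hst j) (stages_n_mono hndV hndW ⇑e ⇑f (le_max_right _ _))
      rw [← (hstab u i hi).1, ← (hstab u j hj).2]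
      exact (St u).dual i hi j hj
    have hliv : LinearIndependent k vv := by
      rw [linearIndependent_iff']
      intro s g hsum i hi
      have h0 := congrArg (B.flip (ww i)) hsum
      rw [map_sum, map_zero] at h0
      simp only [map_smul, LinearMap.flip_apply, smul_eq_mul, hdual,
        mul_ite, mul_one, mul_zero] at h0
      rwa [Finset.sum_ite_eq' s i g, if_pos hi] at h0
    have hliw : LinearIndependent k ww := by
      rw [linearIndependent_iff']
      intro s g hsum j hj
      have h0 := congrArg (B (vv j)) hsum
      rw [map_sum, map_zero] at h0
      simp only [map_smul, smul_eq_mul, hdual] at h0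
      simp only [eq_comm (a := j), mul_ite, mul_one, mul_zero] at h0
      rwa [Finset.sum_ite_eq' s j g, if_pos hj] at h0
    have hspv : ⊤ ≤ Submodule.span k (Set.range vv) := by
      rw [← e.span_eq]
      refine Submodule.span_le.mpr ?_
      rintro x ⟨m, rfl⟩
      have h1 := stages_e_mem hndV hndW ⇑e ⇑f m
      refine Submodule.span_mono ?_ h1
      rintro y ⟨i, hi, rfl⟩
      exact ⟨i, (hstab _ i hi).1.symm⟩
    have hspw : ⊤ ≤ Submodule.span k (Set.range ww) := by
      rw [← f.span_eq]
      refine Submodule.span_le.mpr ?_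
      rintro x ⟨m, rfl⟩
      have h1 := stages_f_mem hndV hndW ⇑e ⇑f m
      refine Submodule.span_mono ?_ h1
      rintro y ⟨i, hi, rfl⟩
      exact ⟨i, (hstab _ i hi).2.symm⟩
    set bv : Module.Basis ℕ k V := Module.Basis.mk hliv hspv with hbv
    set bw : Module.Basis ℕ k W := Module.Basis.mk hliw hspw with hbw
    set g : ((Set.univ : Set ℕ)) ≃ ℕ := Equiv.Set.univ ℕ with hg
    refine ⟨Set.univ, bv.reindex g.symm, bw.reindex g.symm, fun i j => ?_⟩
    rw [Module.Basis.reindex_apply, Module.Basis.reindex_apply, Equiv.symm_symm, hbv, hbw,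
      Module.Basis.coe_mk, Module.Basis.coe_mk, hdual]
    have : g i = g j ↔ i = j := ⟨fun h => g.injective h, fun h => by rw [h]⟩
    simp [this]
end
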